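/- Let T = {t_n} and μ = Σ_n μ_n δ_{t_n} be such that Σ_n |t_n|^{2k} μ_n < ∞ for every integer k ≥ 0. Let {d_n} be a sequence with Σ_n |d_n|² μ_n < ∞, set f(z) = Σ_n d_n μ_n/(z − t_n), and let K be the smallest nonnegative integer with c := Σ_n d_n t_n^K μ_n ≠ 0 (assuming such K exists). Then for every M > 0, z^{K+1} f(z) → c as |z| → ∞ subject to dist(z, T) ≥ |z|^{−M}; that is, for every ε > 0 there is R > 0 such that |z^{K+1} f(z) − c| < ε whenever |z| > R and |z − t_n| ≥ |z|^{−M} for all n. -/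

import Mathlib

open Filter MeasureTheory

noncomputable section

/-- An entire function is of zero exponential type. -/
def ZeroExpType (F : ℂ → ℂ) : Prop :=
  ∀ ε : ℝ, 0 < ε → ∃ C : ℝ, ∀ z : ℂ, ‖F z‖ ≤ C * Real.exp (ε * ‖z‖)

def IsPolynomialFun (F : ℂ → ℂ) : Prop := ∃ P : Polynomial ℂ, F = fun z => P.eval z

/-- The Hamburger class: entire, zero exponential type, not a polynomial, real on `ℝ`,
only real simple zeros `s`, and `|s|^M = o(|B'(s)|)` for every `M > 0`. -/
def HamburgerClass (B : ℂ → ℂ) : Prop :=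
  Differentiable ℂ B ∧ ZeroExpType B ∧ ¬ IsPolynomialFun B ∧
  (∀ x : ℝ, (B (x : ℂ)).im = 0) ∧
  (∀ z : ℂ, B z = 0 → z.im = 0 ∧ deriv B z ≠ 0) ∧
  (∀ M : ℝ, 0 < M → ∀ ε : ℝ, 0 < ε → ∃ R : ℝ, ∀ z : ℂ, B z = 0 → R < ‖z‖ →
    ‖z‖ ^ M ≤ ε * ‖deriv B z‖)

def Estar (E : ℂ → ℂ) : ℂ → ℂ := fun z => starRingEnd ℂ (E (starRingEnd ℂ z))

/-- Hermite–Biehler class: entire, no real zeros, `|E*| < |E|` in the upper half-plane. -/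
def HermiteBiehler (E : ℂ → ℂ) : Prop :=
  Differentiable ℂ E ∧ (∀ x : ℝ, E (x : ℂ) ≠ 0) ∧
  ∀ z : ℂ, 0 < z.im → ‖Estar E z‖ < ‖E z‖

def AOf (E : ℂ → ℂ) : ℂ → ℂ := fun z => (E z + Estar E z) / 2

/-- The data of a two-sided strictly increasing sequence `T = {t n}` of distinct nonzero
reals with `|t n| → ∞` and a positive measure `μ = Σ μ_n δ_{t n}` with
`Σ μ_n/(1+t_n²) < ∞`. -/
structure CauchyData : Type where
  t : ℤ → ℝ
  mu : ℤ → ℝ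
  t_ne_zero : ∀ n, t n ≠ 0
  t_strictMono : StrictMono t
  t_tendsto : Filter.Tendsto (fun n => |t n|) Filter.cofinite Filter.atTop
  mu_pos : ∀ n, 0 < mu n
  mu_summable : Summable fun n => mu n / (1 + t n ^ 2)

namespace CauchyData

variable (d : CauchyData)

/-- `T` is power separated: `|t_{n+1} - t_n| ≥ C |t_n|^(-N)`. -/
def PowerSeparated : Prop :=
  ∃ C : ℝ, 0 < C ∧ ∃ N : ℕ, ∀ n : ℤ, C * |d.t n| ^ (-(N : ℝ)) ≤ |d.t (n + 1) - d.t n|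

def InT (z : ℂ) : Prop := ∃ n : ℤ, z = (d.t n : ℂ)

/-- The Cauchy transform `f(z) = Σ a_n μ_n^{1/2} / (z - t_n)`; membership of `f` in
`H(T,μ)` corresponds to `a ∈ ℓ²`. -/
def transform (a : ℤ → ℂ) : ℂ → ℂ :=
  fun z => ∑' n : ℤ, a n * (Real.sqrt (d.mu n) : ℂ) / (z - (d.t n : ℂ))

/-- The (modified) zero set `Z_f = {w ∉ T : f(w) = 0} ∪ {t_n : a_n = 0}`. -/
def zeroSet (a : ℤ → ℂ) : Set ℂ :=
  {w : ℂ | ¬ d.InT w ∧ d.transform a w = 0} ∪ {w : ℂ | ∃ n : ℤ, w = (d.t n : ℂ) ∧ a n = 0}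

/-- Multiple zeros of `f`: points `w ∈ ℂ∖T` with `f(w) = f'(w) = 0`. -/
def multipleZeros (a : ℤ → ℂ) : Set ℂ :=
  {w : ℂ | ¬ d.InT w ∧ d.transform a w = 0 ∧ deriv (d.transform a) w = 0}

/-- Localization property: no nonzero `f ∈ H(T,μ)` has infinitely many multiple zeros. -/
def HasLocalization : Prop :=
  ∀ a : ℤ → ℂ, Summable (fun n => ‖a n‖ ^ 2) → a ≠ 0 → (d.multipleZeros a).Finite

def DisjointBalls (r : ℤ → ℝ) : Prop :=
  Pairwise fun m n : ℤ => Disjoint (Metric.ball ((d.t m : ℂ)) (r m)) (Metric.ball ((d.t n : ℂ)) (r n))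

/-- Strong localization: pairwise disjoint disks `D(t_n, r_n)` such that for every
nonzero `f`, all but finitely many disks contain exactly one point of `Z_f`. -/
def HasStrongLocalization : Prop :=
  ∃ r : ℤ → ℝ, (∀ n, 0 < r n) ∧ d.DisjointBalls r ∧
    ∀ a : ℤ → ℂ, Summable (fun n => ‖a n‖ ^ 2) → a ≠ 0 →
      {n : ℤ | ¬ ∃! w : ℂ, w ∈ d.zeroSet a ∩ Metric.ball ((d.t n : ℂ)) (r n)}.Finite

/-- `S ⊆ T` is an attraction set for (the function with coefficients) `a`. -/
def IsAttractionSet (a : ℤ → ℂ) (S : Set ℤ) : Prop :=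
  ∃ r : ℤ → ℝ, (∀ n, 0 < r n) ∧ d.DisjointBalls r ∧
    (d.zeroSet a \ ⋃ n : ℤ, Metric.ball ((d.t n : ℂ)) (r n)).Finite ∧
    {n : ℤ | n ∈ S ∧ ¬ ∃! w : ℂ, w ∈ d.zeroSet a ∩ Metric.ball ((d.t n : ℂ)) (r n)}.Finite ∧
    {n : ℤ | n ∉ S ∧ ∃ w : ℂ, w ∈ d.zeroSet a ∩ Metric.ball ((d.t n : ℂ)) (r n)}.Finite

/-- The polynomials belong to `ℓ²(μ)`. -/
def PolysBelong : Prop :=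
  ∀ P : Polynomial ℂ, Summable fun n : ℤ => ‖P.eval ((d.t n : ℂ))‖ ^ 2 * d.mu n

/-- The polynomials are dense in `ℓ²(μ)`. -/
def PolysDense : Prop :=
  ∀ c : ℤ → ℂ, Summable (fun n => ‖c n‖ ^ 2 * d.mu n) → ∀ ε : ℝ, 0 < ε →
    ∃ P : Polynomial ℂ, (∑' n : ℤ, ‖c n - P.eval ((d.t n : ℂ))‖ ^ 2 * d.mu n) < ε

/-- There is a chain `W_1 ⊆ ... ⊆ W_N` of subsets of `T` with infinite successive
differences such that the attraction set of every nonzero `f` is one of the `W_j`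
up to a finite set. -/
def LocChain (N : ℕ) : Prop :=
  d.HasLocalization ∧
  ∃ W : ℕ → Set ℤ,
    (∀ j : ℕ, 1 ≤ j → j < N → W j ⊆ W (j + 1)) ∧
    (∀ j : ℕ, 1 ≤ j → j < N → (W (j + 1) \ W j).Infinite) ∧
    (∀ a : ℤ → ℂ, Summable (fun n => ‖a n‖ ^ 2) → a ≠ 0 →
      ∃ S : Set ℤ, d.IsAttractionSet a S ∧ ∃ j : ℕ, 1 ≤ j ∧ j ≤ N ∧ (symmDiff S (W j)).Finite)

/-- Localization property of type `N`: `N` is the smallest length of such a chain. -/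
def HasLocType (N : ℕ) : Prop := d.LocChain N ∧ ∀ N' : ℕ, N' < N → ¬ d.LocChain N'

end CauchyData

/-- The polynomials belong to the weighted `ℓ²` space over `S` with weight `w`. -/
def polysBelongOn (t : ℤ → ℝ) (S : Set ℤ) (w : ℤ → ℝ) : Prop :=
  ∀ P : Polynomial ℂ, Summable fun n : S => ‖P.eval ((t n.1 : ℂ))‖ ^ 2 * w n.1

/-- The polynomials are dense in the weighted `ℓ²` space over `S` with weight `w`. -/
def polysDenseOn (t : ℤ → ℝ) (S : Set ℤ) (w : ℤ → ℝ) : Prop :=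
  ∀ c : S → ℂ, Summable (fun n => ‖c n‖ ^ 2 * w n.1) → ∀ ε : ℝ, 0 < ε →
    ∃ P : Polynomial ℂ, (∑' n : S, ‖c n - P.eval ((t n.1 : ℂ))‖ ^ 2 * w n.1) < ε

/-- The closed linear span of the polynomials has finite codimension in the weighted
`ℓ²` space over `S`: adding finitely many vectors makes the span dense. -/
def polysFiniteCodimOn (t : ℤ → ℝ) (S : Set ℤ) (w : ℤ → ℝ) : Prop :=
  ∃ (m : ℕ) (v : Fin m → (S → ℂ)),
    (∀ i, Summable fun n => ‖v i n‖ ^ 2 * w n.1) ∧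
    ∀ c : S → ℂ, Summable (fun n => ‖c n‖ ^ 2 * w n.1) → ∀ ε : ℝ, 0 < ε →
      ∃ (P : Polynomial ℂ) (β : Fin m → ℂ),
        (∑' n : S, ‖c n - (P.eval ((t n.1 : ℂ)) + ∑ i, β i * v i n)‖ ^ 2 * w n.1) < ε

/-!
Dividing `z ^ (K + 1) - t ^ (K + 1)` by `z - t` gives
`z ^ (K + 1) / (z - t) = ∑_{j ≤ K} z ^ j t ^ (K - j) + t ^ (K + 1) / (z - t)`, so
`z ^ (K + 1) f(z) = ∑_{j ≤ K} z ^ j m_{K - j} + ∑ d_n μ_n t_n ^ (K + 1) / (z - t_n)`, where the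
moments `m_j = ∑ d_n t_n ^ j μ_n` vanish for `j < K` and `m_K = c`. The remainder is `O(1/|z|)`:
when `|t_n| ≤ |z|/2` we have `|z - t_n| ≥ |z|/2`, and otherwise the loss `|z|^M` coming from
`|z - t_n| ≥ |z|^(-M)` is at most `(2|t_n|)^L / |z|` for an integer `L ≥ M + 1`, which the finite
moments of `μ` absorb since `{d_n} ∈ ℓ²(μ)` and `2xy ≤ x² + y²`.
-/

open Finset

theorem summable_mul_mul_of_summable_sq {ι : Type*} {x y μ : ι → ℝ} (hμ : ∀ i, 0 ≤ μ i)
    (hx : Summable fun i => x i ^ 2 * μ i) (hy : Summable fun i => y i ^ 2 * μ i) :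
    Summable fun i => x i * y i * μ i := by
  refine Summable.of_norm_bounded ((hx.add hy).div_const 2) fun i => ?_
  have hμi := hμ i
  rw [Real.norm_eq_abs, abs_le]
  constructor
  · nlinarith [mul_nonneg hμi (sq_nonneg (x i + y i))]
  · nlinarith [mul_nonneg hμi (sq_nonneg (x i - y i))]

theorem inv_norm_sub_le {E : Type*} [SeminormedAddCommGroup E] {z w : E} {M : ℝ} {L : ℕ}
    (hL : M + 1 ≤ L) (hz : 1 < ‖z‖) (hsep : ‖z‖ ^ (-M) ≤ ‖z - w‖) :
    ‖z - w‖⁻¹ ≤ (2 + (2 * ‖w‖) ^ L) / ‖z‖ := by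
  have hz0 : 0 < ‖z‖ := one_pos.trans hz
  rcases le_or_gt (2 * ‖w‖) ‖z‖ with hw | hw
  · have hnear : ‖z‖ / 2 ≤ ‖z - w‖ := by linarith [norm_sub_norm_le z w]
    calc ‖z - w‖⁻¹ ≤ (‖z‖ / 2)⁻¹ := inv_anti₀ (by positivity) hnear
      _ = 2 / ‖z‖ := inv_div _ _
      _ ≤ (2 + (2 * ‖w‖) ^ L) / ‖z‖ := by gcongr; exact le_add_of_nonneg_right (by positivity)
  · calc ‖z - w‖⁻¹ ≤ (‖z‖ ^ (-M))⁻¹ := inv_anti₀ (by positivity) hsep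
      _ = ‖z‖ ^ (M + 1) / ‖z‖ := by
        rw [Real.rpow_neg hz0.le, inv_inv, Real.rpow_add hz0, Real.rpow_one,
          mul_div_cancel_right₀ _ hz0.ne']
      _ ≤ ‖z‖ ^ (L : ℝ) / ‖z‖ := by gcongr; exact hz.le
      _ ≤ (2 * ‖w‖) ^ L / ‖z‖ := by rw [Real.rpow_natCast]; gcongr
      _ ≤ (2 + (2 * ‖w‖) ^ L) / ‖z‖ := by gcongr; exact le_add_of_nonneg_left zero_le_two

theorem norm_div_sub_le {𝕜 : Type*} [NormedField 𝕜] {b z w : 𝕜} {M : ℝ} {L : ℕ}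
    (hL : M + 1 ≤ L) (hz : 1 < ‖z‖) (hsep : ‖z‖ ^ (-M) ≤ ‖z - w‖) :
    ‖b / (z - w)‖ ≤ ‖b‖ * (2 + (2 * ‖w‖) ^ L) / ‖z‖ := by
  rw [norm_div, div_eq_mul_inv, mul_div_assoc]
  exact mul_le_mul_of_nonneg_left (inv_norm_sub_le hL hz hsep) (norm_nonneg b)

theorem pow_div_sub_eq_geom_sum_add {𝕜 : Type*} [Field 𝕜] (n : ℕ) {x y : 𝕜} (h : x ≠ y) :
    x ^ n / (x - y) = ∑ j ∈ range n, x ^ j * y ^ (n - 1 - j) + y ^ n / (x - y) := by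
  have hxy : x - y ≠ 0 := sub_ne_zero.2 h
  field_simp
  linear_combination -geom_sum₂_mul x y n

theorem pow_mul_tsum_div_sub_eq {ι 𝕜 : Type*} [Field 𝕜] [TopologicalSpace 𝕜]
    [IsTopologicalRing 𝕜] [T2Space 𝕜] (n : ℕ) {u w : ι → 𝕜} {z : 𝕜} (hz : ∀ i, z ≠ w i)
    (hmom : ∀ j < n, Summable fun i => u i * w i ^ j)
    (htail : Summable fun i => u i * w i ^ n / (z - w i)) :
    z ^ n * ∑' i, u i / (z - w i) =
      ∑ j ∈ range n, z ^ j * ∑' i, u i * w i ^ (n - 1 - j) + ∑' i, u i * w i ^ n / (z - w i) := by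
  have hterms : ∀ j ∈ range n, Summable fun i => z ^ j * (u i * w i ^ (n - 1 - j)) :=
    fun j hj => (hmom _ (by have := mem_range.1 hj; omega)).mul_left _
  calc z ^ n * ∑' i, u i / (z - w i)
      = ∑' i, (∑ j ∈ range n, z ^ j * (u i * w i ^ (n - 1 - j)) + u i * w i ^ n / (z - w i)) := by
        rw [← tsum_mul_left]
        refine tsum_congr fun i => ?_
        rw [mul_div_left_comm, pow_div_sub_eq_geom_sum_add n (hz i), mul_add, mul_sum,
          mul_div_assoc]
        congr 1
        exact sum_congr rfl fun j _ => by ring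
    _ = _ := by
        rw [(summable_sum hterms).tsum_add htail, Summable.tsum_finsetSum hterms]
        simp only [tsum_mul_left]

theorem stmt_6_general (d : CauchyData)
    (hmom : ∀ k : ℕ, Summable fun n : ℤ => |d.t n| ^ k * d.mu n)
    (a : ℤ → ℂ) (ha : Summable fun n : ℤ => ‖a n‖ ^ 2 * d.mu n)
    (hsum : ∀ k : ℕ, Summable fun n : ℤ => a n * ((d.t n : ℂ)) ^ k * (d.mu n : ℂ))
    (K : ℕ)
    (hlow : ∀ j : ℕ, j < K → (∑' n : ℤ, a n * ((d.t n : ℂ)) ^ j * (d.mu n : ℂ)) = 0)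
    (c : ℂ) (hc : c = ∑' n : ℤ, a n * ((d.t n : ℂ)) ^ K * (d.mu n : ℂ))
    (M : ℝ) :
    ∀ ε : ℝ, 0 < ε → ∃ R : ℝ, 0 < R ∧ ∀ z : ℂ, R < ‖z‖ →
      (∀ n : ℤ, ‖z‖ ^ (-M) ≤ ‖z - (d.t n : ℂ)‖) →
      ‖z ^ (K + 1) * (∑' n : ℤ, a n * (d.mu n : ℂ) / (z - (d.t n : ℂ))) - c‖ < ε := by
  intro ε hε
  obtain ⟨L, hL⟩ : ∃ L : ℕ, M + 1 ≤ L := exists_nat_ge _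
  set b : ℤ → ℂ := fun n => a n * (d.mu n : ℂ) * (d.t n : ℂ) ^ (K + 1)
  set g : ℤ → ℝ := fun n => ‖b n‖ * (2 + (2 * ‖(d.t n : ℂ)‖) ^ L)
  have hweighted : ∀ k : ℕ, Summable fun n => ‖a n‖ * |d.t n| ^ k * d.mu n := fun k =>
    summable_mul_mul_of_summable_sq (fun n => (d.mu_pos n).le) ha
      (by simpa only [← pow_mul, mul_comm k 2] using hmom (2 * k))
  have hg : Summable g := by
    refine (((hweighted (K + 1)).mul_left 2).add
      ((hweighted (K + 1 + L)).mul_left (2 ^ L))).congr fun n => ?_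
    simp only [g, b, norm_mul, norm_pow, Complex.norm_real, Real.norm_eq_abs,
      abs_of_pos (d.mu_pos n)]
    ring
  refine ⟨max 1 ((∑' n, g n) / ε), lt_max_of_lt_left one_pos, fun z hz hsep => ?_⟩
  have hz1 : 1 < ‖z‖ := (le_max_left _ _).trans_lt hz
  have hzt : ∀ n, z ≠ d.t n := fun n => sub_ne_zero.1 <| norm_pos_iff.1 <|
    (Real.rpow_pos_of_pos (one_pos.trans hz1) _).trans_le (hsep n)
  have hbound : ∀ n, ‖b n / (z - d.t n)‖ ≤ g n / ‖z‖ := fun n => norm_div_sub_le hL hz1 (hsep n)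
  have hexpand := pow_mul_tsum_div_sub_eq (K + 1) (u := fun n => a n * (d.mu n : ℂ))
    (w := fun n => (d.t n : ℂ)) hzt (fun j _ => (hsum j).congr fun n => by ring)
    (Summable.of_norm_bounded (hg.div_const _) hbound)
  have hmoments : ∑ j ∈ range (K + 1),
      z ^ j * ∑' n, a n * (d.mu n : ℂ) * (d.t n : ℂ) ^ (K + 1 - 1 - j) = c := by
    have hreorder : ∀ k : ℕ, ∑' n, a n * (d.mu n : ℂ) * (d.t n : ℂ) ^ k =
        ∑' n, a n * (d.t n : ℂ) ^ k * (d.mu n : ℂ) := fun k => tsum_congr fun n => by ring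
    rw [sum_range_succ', sum_eq_zero fun j hj => ?_, zero_add, hc]
    · rw [pow_zero, one_mul, add_tsub_cancel_right, tsub_zero, hreorder]
    · rw [add_tsub_cancel_right, hreorder, hlow _ (by have := mem_range.1 hj; omega), mul_zero]
  rw [hexpand, hmoments, add_sub_cancel_left]
  calc ‖∑' n, b n / (z - d.t n)‖ ≤ (∑' n, g n) / ‖z‖ :=
        tsum_of_norm_bounded (hg.hasSum.div_const _) hbound
    _ < ε := by
        rw [div_lt_iff₀ (by linarith)]
        exact mul_comm ε ‖z‖ ▸ (div_lt_iff₀ hε).1 ((le_max_right _ _).trans_lt hz)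

/-- If all moments of `μ` are finite, `{d_n} ∈ ℓ²(μ)`,
`f(z) = Σ d_n μ_n/(z - t_n)` and `K` is the smallest nonnegative integer with
`c = Σ d_n t_n^K μ_n ≠ 0`, then `z^{K+1} f(z) → c` as `|z| → ∞` subject to
`dist(z,T) ≥ |z|^{-M}`. -/
theorem stmt_6 (d : CauchyData)
    (hmom : ∀ k : ℕ, Summable fun n : ℤ => |d.t n| ^ k * d.mu n)
    (a : ℤ → ℂ) (ha : Summable fun n : ℤ => ‖a n‖ ^ 2 * d.mu n)
    (hsum : ∀ k : ℕ, Summable fun n : ℤ => a n * ((d.t n : ℂ)) ^ k * (d.mu n : ℂ))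
    (K : ℕ)
    (hlow : ∀ j : ℕ, j < K → (∑' n : ℤ, a n * ((d.t n : ℂ)) ^ j * (d.mu n : ℂ)) = 0)
    (c : ℂ) (hc : c = ∑' n : ℤ, a n * ((d.t n : ℂ)) ^ K * (d.mu n : ℂ)) (hc0 : c ≠ 0)
    (M : ℝ) (hM : 0 < M) :
    ∀ ε : ℝ, 0 < ε → ∃ R : ℝ, 0 < R ∧ ∀ z : ℂ, R < ‖z‖ →
      (∀ n : ℤ, ‖z‖ ^ (-M) ≤ ‖z - (d.t n : ℂ)‖) →
      ‖z ^ (K + 1) * (∑' n : ℤ, a n * (d.mu n : ℂ) / (z - (d.t n : ℂ))) - c‖ < ε :=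
  stmt_6_general d hmom a ha hsum K hlow c hc M
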